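/- arXiv:1603.03114 — 6 statements merged into one kernel-verified Lean document; each statement's English description precedes it below -/
import Mathlib

section
/- If E is an invertible 4N×4N real L-matrix (blocks are scalar·I₂ when block-index sum is even, scalar·R when odd, with the central block symmetry E_{i,j} = E_{2N+1-i,2N+1-j}), then its inverse E⁻¹ is also an L-matrix. -/
set_option synthInstance.maxHeartbeats 1000000
set_option maxHeartbeats 1000000

open Matrix

def R2 : Matrix (Fin 2) (Fin 2) ℝ := !![1, 0; 0, -1]

def blockOf {N : ℕ} (E : Matrix (Fin (2*N) × Fin 2) (Fin (2*N) × Fin 2) ℝ)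
    (i j : Fin (2*N)) : Matrix (Fin 2) (Fin 2) ℝ :=
  Matrix.of fun a b => E (i, a) (j, b)

/-- An L-matrix: each 2×2 block is a scalar multiple of `I₂` when the block index sum is even
and a scalar multiple of `R = diag(1,-1)` when it is odd, and the blocks satisfy the central
symmetry `E_{i,j} = E_{2N+1-i, 2N+1-j}` for `N+1 ≤ j ≤ 2N` (0-based: `N ≤ j`). -/
def IsLMatrix {N : ℕ} (E : Matrix (Fin (2*N) × Fin 2) (Fin (2*N) × Fin 2) ℝ) : Prop :=
  (∀ i j : Fin (2*N), ∃ e : ℝ,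
    blockOf E i j =
      if (i.val + j.val) % 2 = 0 then e • (1 : Matrix (Fin 2) (Fin 2) ℝ) else e • R2) ∧
  (∀ i j : Fin (2*N), N ≤ j.val → blockOf E i j = blockOf E i.rev j.rev)

section Aux

variable {N : ℕ}

lemma blockOf_apply (E : Matrix (Fin (2*N) × Fin 2) (Fin (2*N) × Fin 2) ℝ)
    (i j : Fin (2*N)) (a b : Fin 2) : blockOf E i j a b = E (i, a) (j, b) := rfl

lemma sym_all {E : Matrix (Fin (2*N) × Fin 2) (Fin (2*N) × Fin 2) ℝ}
    (h : ∀ i j : Fin (2*N), N ≤ j.val → blockOf E i j = blockOf E i.rev j.rev) :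
    ∀ i j : Fin (2*N), blockOf E i j = blockOf E i.rev j.rev := by
  intro i j
  by_cases hj : N ≤ j.val
  · exact h i j hj
  · have hj2 : N ≤ j.rev.val := by
      have := j.isLt
      rw [Fin.val_rev]
      omega
    have := h i.rev j.rev hj2
    simpa [Fin.rev_rev] using this.symm

lemma R2_mul_R2 : R2 * R2 = 1 := by
  ext a b
  fin_cases a <;> fin_cases b <;>
    simp [R2, Matrix.mul_apply, Fin.sum_univ_two, Matrix.one_apply]

lemma isL_one : IsLMatrix (1 : Matrix (Fin (2*N) × Fin 2) (Fin (2*N) × Fin 2) ℝ) := by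
  constructor
  · intro i j
    by_cases hij : i = j
    · subst hij
      refine ⟨1, ?_⟩
      have : (i.val + i.val) % 2 = 0 := by omega
      rw [if_pos this]
      ext a b
      simp [blockOf_apply, Matrix.one_apply, Prod.ext_iff]
    · refine ⟨0, ?_⟩
      have : blockOf (1 : Matrix (Fin (2*N) × Fin 2) (Fin (2*N) × Fin 2) ℝ) i j = 0 := by
        ext a b
        simp [blockOf_apply, Matrix.one_apply, Prod.ext_iff, hij]
      rw [this]
      split <;> simp
  · intro i j _
    ext a b
    simp [blockOf_apply, Matrix.one_apply, Prod.ext_iff, Fin.rev_inj]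

lemma isL_add {E F : Matrix (Fin (2*N) × Fin 2) (Fin (2*N) × Fin 2) ℝ}
    (hE : IsLMatrix E) (hF : IsLMatrix F) : IsLMatrix (E + F) := by
  have hblock : ∀ i j, blockOf (E + F) i j = blockOf E i j + blockOf F i j := by
    intro i j; ext a b; simp [blockOf_apply]
  constructor
  · intro i j
    obtain ⟨e, he⟩ := hE.1 i j
    obtain ⟨f, hf⟩ := hF.1 i j
    refine ⟨e + f, ?_⟩
    rw [hblock, he, hf]
    split <;> rw [add_smul]
  · intro i j hj
    rw [hblock, hblock, hE.2 i j hj, hF.2 i j hj]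

lemma isL_smul {E : Matrix (Fin (2*N) × Fin 2) (Fin (2*N) × Fin 2) ℝ} (r : ℝ)
    (hE : IsLMatrix E) : IsLMatrix (r • E) := by
  have hblock : ∀ i j, blockOf (r • E) i j = r • blockOf E i j := by
    intro i j; ext a b; simp [blockOf_apply]
  constructor
  · intro i j
    obtain ⟨e, he⟩ := hE.1 i j
    refine ⟨r * e, ?_⟩
    rw [hblock, he]
    split <;> rw [smul_smul]
  · intro i j hj
    rw [hblock, hblock, hE.2 i j hj]

lemma blockOf_mul (E F : Matrix (Fin (2*N) × Fin 2) (Fin (2*N) × Fin 2) ℝ)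
    (i j : Fin (2*N)) :
    blockOf (E * F) i j = ∑ k : Fin (2*N), blockOf E i k * blockOf F k j := by
  ext a b
  simp only [blockOf_apply, Matrix.mul_apply, Finset.sum_apply, Matrix.sum_apply]
  rw [Fintype.sum_prod_type]

lemma isL_mul {E F : Matrix (Fin (2*N) × Fin 2) (Fin (2*N) × Fin 2) ℝ}
    (hE : IsLMatrix E) (hF : IsLMatrix F) : IsLMatrix (E * F) := by
  constructor
  · intro i j
    choose e he using hE.1
    choose f hf using hF.1
    refine ⟨∑ k : Fin (2*N), e i k * f k j, ?_⟩
    rw [blockOf_mul]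
    have key : ∀ k : Fin (2*N), blockOf E i k * blockOf F k j =
        (e i k * f k j) • (if (i.val + j.val) % 2 = 0 then (1 : Matrix (Fin 2) (Fin 2) ℝ) else R2) := by
      intro k
      rw [he i k, hf k j]
      by_cases h1 : (i.val + k.val) % 2 = 0 <;> by_cases h2 : (k.val + j.val) % 2 = 0 <;>
        [skip; skip; skip; skip] <;>
        simp only [h1, h2, if_true, if_false, if_pos, if_neg] <;>
        first
        | (have h3 : (i.val + j.val) % 2 = 0 := by omega
           rw [if_pos h3, smul_mul_smul_comm]
           simp [R2_mul_R2])
        | (have h3 : ¬ (i.val + j.val) % 2 = 0 := by omega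
           rw [if_neg h3, smul_mul_smul_comm]
           simp)
    rw [Finset.sum_congr rfl (fun k _ => key k), ← Finset.sum_smul]
    split <;> rfl
  · intro i j hj
    have hEs := sym_all hE.2
    have hFs := sym_all hF.2
    rw [blockOf_mul, blockOf_mul]
    rw [← Equiv.sum_comp (Fin.revPerm) (fun k => blockOf E i.rev k * blockOf F k j.rev)]
    refine Finset.sum_congr rfl fun k _ => ?_
    simp only [Fin.revPerm_apply]
    rw [hEs i k, hFs k j]

def LSub (N : ℕ) : Subalgebra ℝ (Matrix (Fin (2*N) × Fin 2) (Fin (2*N) × Fin 2) ℝ) where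
  carrier := {E | IsLMatrix E}
  mul_mem' := isL_mul
  add_mem' := isL_add
  one_mem' := isL_one
  algebraMap_mem' := fun r => by
    rw [Algebra.algebraMap_eq_smul_one]
    exact isL_smul r isL_one
  zero_mem' := by
    have := isL_smul (0 : ℝ) (isL_one (N := N))
    simpa using this

end Aux

/-- the inverse of an invertible L-matrix is an L-matrix. -/
theorem inverse_of_L_matrix_is_L_matrix (N : ℕ) (hN : 1 ≤ N)
    (E : Matrix (Fin (2*N) × Fin 2) (Fin (2*N) × Fin 2) ℝ)
    (hE : IsLMatrix E) (hinv : IsUnit E) : IsLMatrix E⁻¹ := by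
  have hmem : E ∈ LSub N := hE
  set S := LSub N with hS
  haveI : FiniteDimensional ℝ S := inferInstance
  let f : S →ₗ[ℝ] S := LinearMap.mulLeft ℝ (⟨E, hmem⟩ : S)
  have hinj : Function.Injective f := by
    intro x y hxy
    simp only [f, LinearMap.mulLeft_apply] at hxy
    have : E * (x : Matrix _ _ ℝ) = E * (y : Matrix _ _ ℝ) := congrArg Subtype.val hxy
    exact Subtype.ext (hinv.mul_left_cancel this)
  have hsurj : Function.Surjective f := (LinearMap.injective_iff_surjective).mp hinj
  obtain ⟨F, hF⟩ := hsurj 1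
  simp only [f, LinearMap.mulLeft_apply] at hF
  have hEF : E * (F : Matrix _ _ ℝ) = 1 := by
    have := congrArg Subtype.val hF
    simpa using this
  have : E⁻¹ = (F : Matrix _ _ ℝ) := Matrix.inv_eq_right_inv hEF
  rw [this]
  exact F.2
end

section
/- Let S̃ be an n×n complex unitary matrix and define K̃ = Iₙ ⊗ [1, -i]ᵀ (a 2n×n complex matrix). Then the real matrix S = (1/2)(K̃ S̃ K̃* + K̃^# S̃^# K̃ᵀ) is orthogonal (SᵀS = S Sᵀ = I_{2n}) and symplectic with respect to J = Iₙ ⊗ [[0,1],[-1,0]], i.e., Sᵀ J S = J. -/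
open Matrix

/-!
With `L = K̃^#`, the identities `K̃*K̃ = Lᴴ L = 2`, `Lᴴ K̃ = K̃ᵀK̃ = 0` and `K̃K̃* + LLᴴ = 2` say that
`[K̃ | L]/√2` is unitary. Hence `X ↦ ½(K̃ X K̃* + L X^# Lᴴ)` is a unital multiplicative map (the
realification of complex `n × n` matrices); complex conjugation swaps its two summands, so its values
are real, and it turns `X*` into the transpose. Since `J` is the image of `-i`, the identities
`S̃*S̃ = S̃S̃* = 1` and `S̃*(-i)S̃ = -i` transfer to `SᵀS = SSᵀ = 1` and `SᵀJS = J`.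
-/

/-- `K̃ = Iₙ ⊗ [1, -i]ᵀ`, a `2n × n` complex matrix (rows indexed by `Fin n × Fin 2`). -/
def Ktil (n : ℕ) : Matrix (Fin n × Fin 2) (Fin n) ℂ :=
  Matrix.of fun p j =>
    if p.1 = j then (if p.2 = 0 then 1 else -Complex.I) else 0

/-- `J = Iₙ ⊗ [[0,1],[-1,0]]`. -/
def Jmat (n : ℕ) : Matrix (Fin n × Fin 2) (Fin n × Fin 2) ℂ :=
  Matrix.of fun p q =>
    if p.1 = q.1 then
      (if p.2 = 0 ∧ q.2 = 1 then 1 else if p.2 = 1 ∧ q.2 = 0 then -1 else 0)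
    else 0

section QuadratureMatrix

variable {m n : Type*}

theorem map_conj_map_conj (A : Matrix m n ℂ) :
    (A.map (starRingEnd ℂ)).map (starRingEnd ℂ) = A := by
  ext; simp

theorem transpose_map_conj (A : Matrix m n ℂ) : (A.map (starRingEnd ℂ))ᵀ = Aᴴ := rfl

theorem map_conj_transpose (A : Matrix m n ℂ) : Aᵀ.map (starRingEnd ℂ) = Aᴴ := rfl

theorem transpose_conjTranspose_eq_map_conj (A : Matrix m n ℂ) :
    Aᴴᵀ = A.map (starRingEnd ℂ) := rfl

theorem map_conj_conjTranspose (A : Matrix m n ℂ) : Aᴴ.map (starRingEnd ℂ) = Aᵀ := by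
  ext; simp

noncomputable def quadratureMatrix [Fintype n] (K : Matrix m n ℂ) (X : Matrix n n ℂ) :
    Matrix m m ℂ :=
  (1/2 : ℂ) • (K * X * Kᴴ + K.map (starRingEnd ℂ) * X.map (starRingEnd ℂ) * Kᵀ)

theorem map_conj_quadratureMatrix [Fintype n] (K : Matrix m n ℂ) (X : Matrix n n ℂ) :
    (quadratureMatrix K X).map (starRingEnd ℂ) = quadratureMatrix K X := by
  rw [quadratureMatrix, Matrix.map_smul _ _ (fun a => by simp [map_ofNat]),
    Matrix.map_add _ (map_add _)]
  simp only [Matrix.map_mul, map_conj_map_conj, map_conj_conjTranspose, map_conj_transpose,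
    add_comm]

theorem transpose_quadratureMatrix [Fintype n] (K : Matrix m n ℂ) (X : Matrix n n ℂ) :
    (quadratureMatrix K X)ᵀ = quadratureMatrix K Xᴴ := by
  simp only [quadratureMatrix, transpose_smul, transpose_add, transpose_mul, transpose_transpose,
    transpose_map_conj, transpose_conjTranspose_eq_map_conj, map_conj_conjTranspose,
    Matrix.mul_assoc, add_comm]

theorem quadratureMatrix_mul [Fintype m] [Fintype n] [DecidableEq n] {K : Matrix m n ℂ}
    (hK : Kᴴ * K = (2 : ℂ) • 1) (hK₀ : Kᵀ * K = 0) (X Y : Matrix n n ℂ) :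
    quadratureMatrix K X * quadratureMatrix K Y = quadratureMatrix K (X * Y) := by
  have hL : Kᵀ * K.map (starRingEnd ℂ) = (2 : ℂ) • 1 := by
    rw [← map_conj_conjTranspose, ← Matrix.map_mul, hK]
    ext i j
    rcases eq_or_ne i j with rfl | h <;> simp [*, map_ofNat]
  have hL₀ : Kᴴ * K.map (starRingEnd ℂ) = 0 := by
    rw [← map_conj_transpose, ← Matrix.map_mul, hK₀, Matrix.map_zero _ (map_zero _)]
  have h₁ (Z : Matrix n m ℂ) : Kᴴ * (K * Z) = (2 : ℂ) • Z := by
    rw [← Matrix.mul_assoc, hK, smul_mul, Matrix.one_mul]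
  have h₂ (Z : Matrix n m ℂ) : Kᵀ * (K.map (starRingEnd ℂ) * Z) = (2 : ℂ) • Z := by
    rw [← Matrix.mul_assoc, hL, smul_mul, Matrix.one_mul]
  have h₃ (Z : Matrix n m ℂ) : Kᵀ * (K * Z) = 0 := by
    rw [← Matrix.mul_assoc, hK₀, Matrix.zero_mul]
  have h₄ (Z : Matrix n m ℂ) : Kᴴ * (K.map (starRingEnd ℂ) * Z) = 0 := by
    rw [← Matrix.mul_assoc, hL₀, Matrix.zero_mul]
  simp only [quadratureMatrix, Matrix.map_mul, smul_mul, Matrix.mul_smul, add_mul,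
    Matrix.mul_add, Matrix.mul_assoc, h₁, h₂, h₃, h₄, smul_zero, Matrix.mul_zero, add_zero,
    zero_add, smul_smul, smul_add]
  norm_num

theorem quadratureMatrix_one [DecidableEq m] [Fintype n] [DecidableEq n] {K : Matrix m n ℂ}
    (hK : K * Kᴴ + K.map (starRingEnd ℂ) * Kᵀ = (2 : ℂ) • 1) :
    quadratureMatrix K 1 = 1 := by
  rw [quadratureMatrix, Matrix.map_one _ (map_zero _) (map_one _), Matrix.mul_one,
    Matrix.mul_one, hK, smul_smul]
  norm_num

end QuadratureMatrix

theorem Ktil_conjTranspose_mul_self (n : ℕ) : (Ktil n)ᴴ * Ktil n = (2 : ℂ) • 1 := by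
  ext i j
  rcases eq_or_ne i j with rfl | h
  · simp [Matrix.mul_apply, Ktil, Fintype.sum_prod_type, one_add_one_eq_two]
  · simp [Matrix.mul_apply, Ktil, Fintype.sum_prod_type, h, h.symm]

theorem Ktil_transpose_mul_self (n : ℕ) : (Ktil n)ᵀ * Ktil n = 0 := by
  ext i j
  simp [Matrix.mul_apply, Ktil, Fintype.sum_prod_type]

theorem Ktil_mul_conjTranspose_add (n : ℕ) :
    Ktil n * (Ktil n)ᴴ + (Ktil n).map (starRingEnd ℂ) * (Ktil n)ᵀ = (2 : ℂ) • 1 := by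
  ext ⟨i, a⟩ ⟨j, b⟩
  rcases eq_or_ne i j with rfl | h
  · fin_cases a <;> fin_cases b <;> simp [Matrix.mul_apply, Ktil, one_add_one_eq_two]
  · simp [Matrix.mul_apply, Ktil, h, h.symm]

theorem Jmat_eq_quadratureMatrix (n : ℕ) :
    Jmat n = quadratureMatrix (Ktil n) (-Complex.I • 1) := by
  have hconj : (-Complex.I • 1 : Matrix (Fin n) (Fin n) ℂ).map (starRingEnd ℂ) =
      Complex.I • 1 := by
    ext i j
    rcases eq_or_ne i j with rfl | h <;> simp [*]
  simp only [quadratureMatrix, hconj, Matrix.mul_smul, Matrix.smul_mul, Matrix.mul_one]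
  ext ⟨i, a⟩ ⟨j, b⟩
  rcases eq_or_ne i j with rfl | h
  · fin_cases a <;> fin_cases b <;> norm_num [Jmat, Matrix.mul_apply, Ktil]
  · simp [Jmat, Matrix.mul_apply, Ktil, h, h.symm]

/-- for a unitary `S̃`, the matrix
`S = (1/2)(K̃ S̃ K̃* + K̃^# S̃^# K̃ᵀ)` has real entries, is orthogonal and is symplectic. -/
theorem quadrature_matrix_orthogonal_symplectic (n : ℕ)
    (St : Matrix (Fin n) (Fin n) ℂ)
    (hUnitary : St.conjTranspose * St = 1 ∧ St * St.conjTranspose = 1)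
    (S : Matrix (Fin n × Fin 2) (Fin n × Fin 2) ℂ)
    (hS : S = (1/2 : ℂ) •
      (Ktil n * St * (Ktil n).conjTranspose +
        (Ktil n).map (starRingEnd ℂ) * St.map (starRingEnd ℂ) * (Ktil n).transpose)) :
    (∀ p q, (S p q).im = 0) ∧
    S.transpose * S = 1 ∧ S * S.transpose = 1 ∧
    S.transpose * Jmat n * S = Jmat n := by
  obtain ⟨hU₁, hU₂⟩ := hUnitary
  obtain rfl : S = quadratureMatrix (Ktil n) St := hS
  have hmul := quadratureMatrix_mul (Ktil_conjTranspose_mul_self n) (Ktil_transpose_mul_self n)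
  have hone := quadratureMatrix_one (Ktil_mul_conjTranspose_add n)
  refine ⟨fun p q => ?_, ?_, ?_, ?_⟩
  · exact Complex.conj_eq_iff_im.mp (congr_fun₂ (map_conj_quadratureMatrix (Ktil n) St) p q)
  · rw [transpose_quadratureMatrix, hmul, hU₁, hone]
  · rw [transpose_quadratureMatrix, hmul, hU₂, hone]
  · rw [Jmat_eq_quadratureMatrix, transpose_quadratureMatrix, hmul, hmul, Matrix.mul_smul,
      Matrix.mul_one, Matrix.smul_mul, hU₁]
end

section
/- Let h₁, h₂, m, n be reals with n ≠ 0, let R = diag(1,-1), and define the 4×4 block matrices T_B = [[O₂,O₂],[-h₂R,-h₁I₂]], T_C = [[-h₁I₂,-h₂R],[O₂,O₂]] and T_D(m,n) = [[I₂,O₂],[mR, nI₂]]. Then det(T_D(m,n)) = n², and T_D(0,1) - T_B·T_D(m,n)⁻¹·T_C = T_D(m', n') where m' = -h₁h₂ + h₁²m/n and n' = 1 - h₂² + h₁h₂m/n. -/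
open Matrix

noncomputable def TBmat (h₁ h₂ : ℝ) : Matrix (Fin 4) (Fin 4) ℝ :=
  !![0,0,0,0; 0,0,0,0; -h₂,0,-h₁,0; 0,h₂,0,-h₁]

noncomputable def TCmat (h₁ h₂ : ℝ) : Matrix (Fin 4) (Fin 4) ℝ :=
  !![-h₁,0,-h₂,0; 0,-h₁,0,h₂; 0,0,0,0; 0,0,0,0]

noncomputable def TDmat (m n : ℝ) : Matrix (Fin 4) (Fin 4) ℝ :=
  !![1,0,0,0; 0,1,0,0; m,0,n,0; 0,-m,0,n]

set_option maxHeartbeats 1000000 in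
/-- `det T_D(m,n) = n²`, and for `n ≠ 0`,
`T_D(0,1) - T_B T_D(m,n)⁻¹ T_C = T_D(m',n')` with
`m' = -h₁h₂ + h₁²m/n`, `n' = 1 - h₂² + h₁h₂m/n`. -/
theorem TD_det_and_schur_step (h₁ h₂ m n : ℝ) (hn : n ≠ 0) :
    (TDmat m n).det = n^2 ∧
    TDmat 0 1 - TBmat h₁ h₂ * (TDmat m n)⁻¹ * TCmat h₁ h₂
      = TDmat (-h₁*h₂ + h₁^2 * m / n) (1 - h₂^2 + h₁*h₂ * m / n) := by
  have hinv : (TDmat m n)⁻¹ = TDmat (-m/n) (1/n) := by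
    apply Matrix.inv_eq_right_inv
    ext i j
    fin_cases i <;> fin_cases j <;>
      simp [TDmat, Matrix.mul_apply, Fin.sum_univ_four] <;> field_simp <;> ring
  constructor
  · simp [TDmat, Matrix.det_succ_row_zero, Fin.sum_univ_succ]; ring
  · rw [hinv]
    ext i j
    fin_cases i <;> fin_cases j
    all_goals simp [TDmat, TBmat, TCmat, Matrix.mul_apply, Matrix.sub_apply,
      Matrix.vecHead, Matrix.vecTail, Fin.sum_univ_four]
    all_goals field_simp
    all_goals ring
end

section
/- Let h₁, h₂, m, n ∈ ℝ and let T(m,n) be the 8×8 block matrix [[I₄, T_B],[T_C, T_D(m,n)]] with T_B = [[O₂,O₂],[-h₂R,-h₁I₂]], T_C = [[-h₁I₂,-h₂R],[O₂,O₂]], T_D(m,n) = [[I₂,O₂],[mR,nI₂]], R = diag(1,-1). Then det(T(m,n)) = (h₁h₂m + n - h₂²n)². -/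
open Matrix

lemma aux_sub (h₁ h₂ m n : ℝ) :
    TDmat m n - TCmat h₁ h₂ * TBmat h₁ h₂ =
    !![1 - h₂^2, 0, -(h₂*h₁), 0;
       0, 1 - h₂^2, 0, h₂*h₁;
       m, 0, n, 0;
       0, -m, 0, n] := by
  ext i j
  fin_cases i <;> fin_cases j <;>
    simp [TBmat, TCmat, TDmat, Matrix.mul_apply, Fin.sum_univ_succ,
      Matrix.vecHead, Matrix.vecTail] <;> ring

lemma sA1 : (Fin.succAbove 2 1 : Fin 4) = 1 := rfl
lemma sA2 : (Fin.succAbove 2 2 : Fin 4) = 3 := rfl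
lemma aux_det (a b m n : ℝ) :
    (!![a, 0, -b, 0; 0, a, 0, b; m, 0, n, 0; 0, -m, 0, n] :
      Matrix (Fin 4) (Fin 4) ℝ).det = (a*n + b*m)^2 := by
  rw [Matrix.det_succ_row_zero]
  simp [Fin.sum_univ_four, Matrix.det_fin_three, Matrix.submatrix,
    Matrix.vecHead, Matrix.vecTail, sA1, sA2]
  ring

/-- `det [[I₄, T_B],[T_C, T_D(m,n)]] = (h₁h₂m + n - h₂²n)²`. -/
theorem det_T3_block (h₁ h₂ m n : ℝ) :
    (Matrix.fromBlocks (1 : Matrix (Fin 4) (Fin 4) ℝ)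
        (TBmat h₁ h₂) (TCmat h₁ h₂) (TDmat m n)).det
      = (h₁*h₂*m + n - h₂^2*n)^2 := by
  have key := Matrix.det_fromBlocks_one₁₁ (TBmat h₁ h₂) (TCmat h₁ h₂) (TDmat m n)
  have step : (TDmat m n - TCmat h₁ h₂ * TBmat h₁ h₂).det = (h₁*h₂*m + n - h₂^2*n)^2 := by
    rw [aux_sub, aux_det]; ring
  refine Eq.trans (Eq.trans (Eq.trans (congrArg Matrix.det ?_) key) (congrArg Matrix.det ?_)) step
  · rfl
  · rfl
end

section
/- Let T_{2A}(m,n) = [[0,n,0,-m],[0,0,1,0],[0,0,0,1],[-h₁,0,-h₂,0]], T_{2B} = [[0,0,0,0],[-h₂,0,-h₁,0],[0,h₂,0,-h₁],[1,0,0,0]], T_{2C} = [[0,-h₁,0,h₂],[0,0,0,0],[0,0,0,0],[0,0,0,0]]. Then det(T_{2A}(m,n)) = h₁·n, and if h₁n ≠ 0 then T_{2A}(0,1) - T_{2C}·T_{2A}(m,n)⁻¹·T_{2B} = T_{2A}(m',n') with m' = -h₁h₂ + h₁²m/n and n' = 1 - h₂² + h₁h₂m/n. -/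
open Matrix

noncomputable def T2A (h₁ h₂ m n : ℝ) : Matrix (Fin 4) (Fin 4) ℝ :=
  !![0,n,0,-m; 0,0,1,0; 0,0,0,1; -h₁,0,-h₂,0]

noncomputable def T2B (h₁ h₂ : ℝ) : Matrix (Fin 4) (Fin 4) ℝ :=
  !![0,0,0,0; -h₂,0,-h₁,0; 0,h₂,0,-h₁; 1,0,0,0]

noncomputable def T2C (h₁ h₂ : ℝ) : Matrix (Fin 4) (Fin 4) ℝ :=
  !![0,-h₁,0,h₂; 0,0,0,0; 0,0,0,0; 0,0,0,0]

/-!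
For `h₁ n ≠ 0` the inverse of `T_{2A}(m,n)` is an explicit matrix. Since only row 0 of `T_{2C}`
is nonzero, so is only row 0 of the correction `T_{2C} T_{2A}(m,n)⁻¹ T_{2B}`, and its entries sit
exactly where `n` and `-m` sit in `T_{2A}`: subtracting it from `T_{2A}(0,1)` only shifts the
parameters `(m, n)`.
-/

theorem det_T2A (h₁ h₂ m n : ℝ) : (T2A h₁ h₂ m n).det = h₁ * n := by
  simp [T2A, det_succ_row_zero, Fin.sum_univ_succ, Fin.succAbove]
  ring

noncomputable def T2AInv (h₁ h₂ m n : ℝ) : Matrix (Fin 4) (Fin 4) ℝ :=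
  !![0,-h₂/h₁,0,-1/h₁; 1/n,0,m/n,0; 0,1,0,0; 0,0,1,0]

theorem T2A_mul_T2AInv {h₁ n : ℝ} (h₂ m : ℝ) (hh₁ : h₁ ≠ 0) (hn : n ≠ 0) :
    T2A h₁ h₂ m n * T2AInv h₁ h₂ m n = 1 := by
  ext i j
  fin_cases i <;> fin_cases j <;>
    simp [T2A, T2AInv, mul_apply, Fin.sum_univ_four] <;> field_simp <;> ring

theorem inv_T2A {h₁ n : ℝ} (h₂ m : ℝ) (hh₁ : h₁ ≠ 0) (hn : n ≠ 0) :
    (T2A h₁ h₂ m n)⁻¹ = T2AInv h₁ h₂ m n :=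
  inv_eq_right_inv (T2A_mul_T2AInv h₂ m hh₁ hn)

theorem T2C_mul_T2AInv_mul_T2B (h₁ h₂ m n : ℝ) :
    T2C h₁ h₂ * T2AInv h₁ h₂ m n * T2B h₁ h₂ =
      !![0, h₂ * (h₂ - h₁ * m / n), 0, -h₁ * (h₂ - h₁ * m / n);
        0,0,0,0; 0,0,0,0; 0,0,0,0] := by
  ext i j
  fin_cases i <;> fin_cases j <;>
    simp [T2B, T2C, T2AInv, mul_apply, Fin.sum_univ_four] <;> ring

theorem T2A_sub_row_zero (h₁ h₂ m n a b : ℝ) :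
    T2A h₁ h₂ m n - !![0,a,0,b; 0,0,0,0; 0,0,0,0; 0,0,0,0] = T2A h₁ h₂ (m + b) (n - a) := by
  ext i j
  fin_cases i <;> fin_cases j <;> simp [T2A, sub_eq_add_neg, add_comm]

/-- `det T_{2A}(m,n) = h₁ n`, and for `h₁ n ≠ 0`,
`T_{2A}(0,1) - T_{2C} T_{2A}(m,n)⁻¹ T_{2B} = T_{2A}(m',n')` with
`m' = -h₁h₂ + h₁²m/n`, `n' = 1 - h₂² + h₁h₂m/n`. -/
theorem T2A_det_and_schur_step (h₁ h₂ m n : ℝ) :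
    (T2A h₁ h₂ m n).det = h₁ * n ∧
    (h₁ * n ≠ 0 →
      T2A h₁ h₂ 0 1 - T2C h₁ h₂ * (T2A h₁ h₂ m n)⁻¹ * T2B h₁ h₂
        = T2A h₁ h₂ (-h₁*h₂ + h₁^2 * m / n) (1 - h₂^2 + h₁*h₂ * m / n)) := by
  refine ⟨det_T2A h₁ h₂ m n, fun hdet => ?_⟩
  obtain ⟨hh₁, hn⟩ := mul_ne_zero_iff.mp hdet
  rw [inv_T2A h₂ m hh₁ hn, T2C_mul_T2AInv_mul_T2B, T2A_sub_row_zero]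
  congr 1 <;> ring
end

section
/- Let E be a 4N×4N real matrix whose 2×2 blocks satisfy E_{i,j} = e_{ij}I₂ for i+j even and E_{i,j} = e_{ij}R for i+j odd (R = diag(1,-1)), and let U be the 4N×4N permutation matrix with rows [I_{2N}⊗[1,0]; I_{2N}⊗[0,1]]. Then U·E·Uᵀ is block diagonal: U E Uᵀ = diag(Ẽ, Ê), where Ẽ = (e_{ij}) is the 2N×2N matrix of block scalars and Ê_{ij} = e_{ij} if i+j is even, Ê_{ij} = -e_{ij} if i+j is odd. In particular det(E) = det(Ẽ)·det(Ê). -/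
open Matrix

/-- The permutation matrix `U = [I_{2N}⊗[1,0]; I_{2N}⊗[0,1]]` gathering the first
(odd-indexed) quadratures followed by the second (even-indexed) quadratures. -/
def Uperm (N : ℕ) : Matrix (Fin 2 × Fin (2*N)) (Fin (2*N) × Fin 2) ℝ :=
  Matrix.of fun p q => if q = (p.2, p.1) then 1 else 0

/-- for a parity-block matrix `E` with block scalars `e_{ij}`,
`U E Uᵀ = diag(Ẽ, Ê)` with `Ẽ = (e_{ij})` and `Ê_{ij} = ±e_{ij}` according to the parity
of `i+j`; in particular `det E = det Ẽ · det Ê`. -/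
theorem conj_by_perm_block_diag (N : ℕ) (hN : 1 ≤ N)
    (e : Fin (2*N) → Fin (2*N) → ℝ)
    (E : Matrix (Fin (2*N) × Fin 2) (Fin (2*N) × Fin 2) ℝ)
    (hE : ∀ (i j : Fin (2*N)) (a b : Fin 2),
      E (i, a) (j, b) =
        (if (i.val + j.val) % 2 = 0 then e i j • (1 : Matrix (Fin 2) (Fin 2) ℝ)
         else e i j • R2) a b) :
    (Uperm N * E * (Uperm N).transpose =
      Matrix.of fun p q =>
        if p.1 = q.1 then
          (if p.1 = (0 : Fin 2) then e p.2 q.2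
           else if (p.2.val + q.2.val) % 2 = 0 then e p.2 q.2 else -e p.2 q.2)
        else 0) ∧
    E.det = (Matrix.of e).det *
      (Matrix.of fun i j : Fin (2*N) =>
        if (i.val + j.val) % 2 = 0 then e i j else -e i j).det := by
  set σ : (Fin 2 × Fin (2*N)) ≃ (Fin (2*N) × Fin 2) := Equiv.prodComm _ _ with hσ
  set F : Matrix (Fin 2 × Fin (2*N)) (Fin 2 × Fin (2*N)) ℝ :=
    Matrix.of fun p q =>
      if p.1 = q.1 then
        (if p.1 = (0 : Fin 2) then e p.2 q.2
         else if (p.2.val + q.2.val) % 2 = 0 then e p.2 q.2 else -e p.2 q.2)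
      else 0 with hF
  have key1 : Uperm N * E * (Uperm N).transpose = E.submatrix σ σ := by
    ext p q
    simp [Matrix.mul_apply, Uperm, Matrix.transpose_apply, Finset.sum_ite_eq,
      Finset.sum_ite_eq', hσ, Prod.swap]
  have key2 : E.submatrix σ σ = F := by
    ext ⟨a, i⟩ ⟨b, j⟩
    rw [Matrix.submatrix_apply]
    simp only [hσ, Equiv.prodComm_apply, Prod.swap_prod_mk]
    rw [hE i j a b, hF]
    fin_cases a <;> fin_cases b <;>
      simp [R2, Matrix.one_apply] <;> split_ifs <;> simp
  refine ⟨key1.trans key2, ?_⟩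
  set M : Fin 2 → Matrix (Fin (2*N)) (Fin (2*N)) ℝ := fun a =>
    if a = 0 then Matrix.of e
    else Matrix.of fun i j : Fin (2*N) =>
      if (i.val + j.val) % 2 = 0 then e i j else -e i j with hM
  have key3 : F = (Matrix.blockDiagonal M).submatrix σ σ := by
    ext ⟨a, i⟩ ⟨b, j⟩
    simp only [hF, Matrix.submatrix_apply, hσ, Equiv.prodComm_apply, Prod.swap_prod_mk,
      Matrix.blockDiagonal_apply, hM, Matrix.of_apply]
    by_cases hab : a = b
    · subst hab; simp; split_ifs <;> simp_all
    · simp [hab, Ne.symm hab]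
  have hdet : E.det = F.det := by
    rw [← Matrix.det_submatrix_equiv_self σ E, key2]
  rw [hdet, key3, Matrix.det_submatrix_equiv_self, Matrix.det_blockDiagonal,
    Fin.prod_univ_two, hM]
  norm_num
end
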